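/- arXiv:1607.07229 — 7 statements merged into one kernel-verified Lean document; each statement's English description precedes it below -/
import Mathlib

section
/- Let R be a positive linear operator on measurable functions on a measure space (X, 𝓑) satisfying R((f∘σ)g) = f·R(g) for all measurable f, g, where σ : X → X is a measurable surjective endomorphism, and R(1) = 1. If λ and μ are probability measures on X with λ ≪ μ, then λR ≪ μR, where λR is defined by ∫ f d(λR) = ∫ R(f) dλ, and the Radon–Nikodym derivative satisfies d(λR)/d(μR) = (dλ/dμ) ∘ σ (μR-a.e.). -/
/-!
Write `h = dλ/dμ`. For a measurable set `A`, the pull-out property with `f = 1_B`, `g = 1_A`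
shows that pushing `μR` restricted to `A` forward by `σ` gives the measure `R(1_A) · μ`. Hence
`∫_A h ∘ σ d(μR) = ∫ h · R(1_A) dμ = ∫ R(1_A) dλ = λR(A)`,
i.e. `λR = (h ∘ σ) · μR`, which gives both absolute continuity and the density.
-/

open MeasureTheory

namespace TransferOperator

variable {X : Type*} {R : (X → ℝ) → X → ℝ}

lemma apply_indicator_mem_Icc (hRpos : ∀ f, (∀ x, 0 ≤ f x) → ∀ x, 0 ≤ R f x)
    (hRadd : ∀ f g, R (f + g) = R f + R g) (hRone : R (fun _ => 1) = fun _ => 1)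
    (A : Set X) (x : X) : R (A.indicator 1) x ∈ Set.Icc 0 1 := by
  have hnonneg (s : Set X) : 0 ≤ R (s.indicator 1) x :=
    hRpos _ (Set.indicator_nonneg fun _ _ => zero_le_one) x
  have hsum := congrFun (hRadd (A.indicator 1) (Aᶜ.indicator 1)) x
  rw [Set.indicator_self_add_compl] at hsum
  change R (fun _ => 1) x = _ at hsum
  rw [hRone, Pi.add_apply] at hsum
  exact ⟨hnonneg A, by linarith [hnonneg Aᶜ]⟩

variable [MeasurableSpace X]

lemma isProbabilityMeasure_of_integral_eq (hRone : R (fun _ => 1) = fun _ => 1)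
    {ν ν' : Measure X} [IsProbabilityMeasure ν]
    (hν' : ∀ f : X → ℝ, Measurable f → (∃ C, ∀ x, |f x| ≤ C) →
      ∫ x, f x ∂ν' = ∫ x, R f x ∂ν) :
    IsProbabilityMeasure ν' := by
  have h := hν' (fun _ => 1) measurable_const ⟨1, by simp⟩
  rw [hRone, integral_const, integral_const] at h
  simp only [probReal_univ, smul_eq_mul, mul_one] at h
  exact ⟨(ENNReal.toReal_eq_one_iff _).mp h⟩

lemma apply_eq_lintegral (hRmeas : ∀ f, Measurable f → Measurable (R f))
    (hRpos : ∀ f, (∀ x, 0 ≤ f x) → ∀ x, 0 ≤ R f x)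
    (hRadd : ∀ f g, R (f + g) = R f + R g) (hRone : R (fun _ => 1) = fun _ => 1)
    {ν ν' : Measure X} [IsFiniteMeasure ν] [IsFiniteMeasure ν']
    (hν' : ∀ f : X → ℝ, Measurable f → (∃ C, ∀ x, |f x| ≤ C) →
      ∫ x, f x ∂ν' = ∫ x, R f x ∂ν)
    {A : Set X} (hA : MeasurableSet A) :
    ν' A = ∫⁻ x, ENNReal.ofReal (R (A.indicator 1) x) ∂ν := by
  have hbound := apply_indicator_mem_Icc hRpos hRadd hRone A
  have hmeas : Measurable (A.indicator (1 : X → ℝ)) := measurable_const.indicator hA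
  have hint : Integrable (R (A.indicator 1)) ν :=
    .of_bound (hRmeas _ hmeas).aestronglyMeasurable 1 <| .of_forall fun x => by
      rw [Real.norm_of_nonneg (hbound x).1]; exact (hbound x).2
  have hind_bound : ∃ C, ∀ x, |A.indicator (1 : X → ℝ) x| ≤ C :=
    ⟨1, fun x => by by_cases hx : x ∈ A <;> simp [hx]⟩
  rw [← ofReal_measureReal, ← integral_indicator_one hA, hν' _ hmeas hind_bound,
    ofReal_integral_eq_lintegral_ofReal hint (.of_forall fun x => (hbound x).1)]

lemma map_restrict_eq_withDensity {σ : X → X} (hσ : Measurable σ)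
    (hRmeas : ∀ f, Measurable f → Measurable (R f))
    (hRpos : ∀ f, (∀ x, 0 ≤ f x) → ∀ x, 0 ≤ R f x)
    (hRadd : ∀ f g, R (f + g) = R f + R g) (hRone : R (fun _ => 1) = fun _ => 1)
    (hpull : ∀ f g, Measurable f → Measurable g →
      R (fun x => f (σ x) * g x) = fun x => f x * R g x)
    {μ μR : Measure X} [IsFiniteMeasure μ] [IsFiniteMeasure μR]
    (hμR : ∀ f : X → ℝ, Measurable f → (∃ C, ∀ x, |f x| ≤ C) →
      ∫ x, f x ∂μR = ∫ x, R f x ∂μ)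
    {A : Set X} (hA : MeasurableSet A) :
    (μR.restrict A).map σ = μ.withDensity fun x => ENNReal.ofReal (R (A.indicator 1) x) := by
  ext B hB
  have hpullAB :
      R ((σ ⁻¹' B ∩ A).indicator 1) = fun x => B.indicator 1 x * R (A.indicator 1) x := by
    rw [← hpull (B.indicator 1) (A.indicator 1) (measurable_const.indicator hB)
      (measurable_const.indicator hA)]
    congr 1
    ext x
    by_cases hxA : x ∈ A <;> by_cases hxB : σ x ∈ B <;> simp [hxA, hxB]
  rw [Measure.map_apply hσ hB, Measure.restrict_apply (hσ hB), withDensity_apply _ hB,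
    apply_eq_lintegral hRmeas hRpos hRadd hRone hμR ((hσ hB).inter hA), hpullAB,
    ← lintegral_indicator hB]
  congr 1
  ext x
  by_cases hxB : x ∈ B <;> simp [hxB]

theorem eq_withDensity_rnDeriv_comp {σ : X → X} (hσ : Measurable σ)
    (hRmeas : ∀ f, Measurable f → Measurable (R f))
    (hRpos : ∀ f, (∀ x, 0 ≤ f x) → ∀ x, 0 ≤ R f x)
    (hRadd : ∀ f g, R (f + g) = R f + R g) (hRone : R (fun _ => 1) = fun _ => 1)
    (hpull : ∀ f g, Measurable f → Measurable g →
      R (fun x => f (σ x) * g x) = fun x => f x * R g x)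
    {lam mu lamR muR : Measure X} [IsFiniteMeasure lam] [IsFiniteMeasure mu]
    [IsFiniteMeasure lamR] [IsFiniteMeasure muR]
    (hlamR : ∀ f : X → ℝ, Measurable f → (∃ C, ∀ x, |f x| ≤ C) →
      ∫ x, f x ∂lamR = ∫ x, R f x ∂lam)
    (hmuR : ∀ f : X → ℝ, Measurable f → (∃ C, ∀ x, |f x| ≤ C) →
      ∫ x, f x ∂muR = ∫ x, R f x ∂mu)
    (hac : lam ≪ mu) :
    lamR = muR.withDensity fun x => lam.rnDeriv mu (σ x) := by
  ext A hA
  have hRA : Measurable fun x => ENNReal.ofReal (R (A.indicator 1) x) :=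
    (hRmeas _ (measurable_const.indicator hA)).ennreal_ofReal
  have hdens := Measure.measurable_rnDeriv lam mu
  calc lamR A = ∫⁻ x, ENNReal.ofReal (R (A.indicator 1) x) ∂lam :=
        apply_eq_lintegral hRmeas hRpos hRadd hRone hlamR hA
    _ = ∫⁻ x, ENNReal.ofReal (R (A.indicator 1) x) ∂mu.withDensity (lam.rnDeriv mu) := by
        rw [Measure.withDensity_rnDeriv_eq lam mu hac]
    _ = ∫⁻ x, lam.rnDeriv mu x
          ∂mu.withDensity fun x => ENNReal.ofReal (R (A.indicator 1) x) := by
        rw [lintegral_withDensity_eq_lintegral_mul _ hdens hRA,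
          lintegral_withDensity_eq_lintegral_mul _ hRA hdens, mul_comm]
    _ = ∫⁻ x, lam.rnDeriv mu x ∂(muR.restrict A).map σ := by
        rw [map_restrict_eq_withDensity hσ hRmeas hRpos hRadd hRone hpull hmuR hA]
    _ = muR.withDensity (fun x => lam.rnDeriv mu (σ x)) A := by
        rw [lintegral_map hdens hσ, withDensity_apply _ hA]

end TransferOperator

open TransferOperator in
theorem stmt0_general {X : Type*} [MeasurableSpace X]
    (σ : X → X) (hσ : Measurable σ)
    (R : (X → ℝ) → (X → ℝ))
    (hRmeas : ∀ f, Measurable f → Measurable (R f))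
    (hRpos : ∀ f, (∀ x, 0 ≤ f x) → ∀ x, 0 ≤ R f x)
    (hRadd : ∀ f g, R (f + g) = R f + R g)
    (hRone : R (fun _ => 1) = fun _ => 1)
    (hpull : ∀ f g, Measurable f → Measurable g →
      R (fun x => f (σ x) * g x) = fun x => f x * R g x)
    (lam mu lamR muR : Measure X)
    [IsProbabilityMeasure lam] [IsProbabilityMeasure mu]
    (hlamR : ∀ f : X → ℝ, Measurable f → (∃ C, ∀ x, |f x| ≤ C) →
      ∫ x, f x ∂lamR = ∫ x, R f x ∂lam)
    (hmuR : ∀ f : X → ℝ, Measurable f → (∃ C, ∀ x, |f x| ≤ C) →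
      ∫ x, f x ∂muR = ∫ x, R f x ∂mu)
    (hac : lam ≪ mu) :
    lamR ≪ muR ∧
      lamR.rnDeriv muR =ᵐ[muR] fun x => lam.rnDeriv mu (σ x) := by
  have := isProbabilityMeasure_of_integral_eq hRone hlamR
  have := isProbabilityMeasure_of_integral_eq hRone hmuR
  rw [eq_withDensity_rnDeriv_comp hσ hRmeas hRpos hRadd hRone hpull hlamR hmuR hac]
  exact ⟨withDensity_absolutelyContinuous _ _,
    Measure.rnDeriv_withDensity _ ((Measure.measurable_rnDeriv lam mu).comp hσ)⟩

/-- If `R` is a positive normalized transfer operator compatible with the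
measurable surjective endomorphism `σ` (pull-out property), and `λ ≪ μ` are probability
measures, then `λR ≪ μR` and `d(λR)/d(μR) = (dλ/dμ) ∘ σ` (`μR`-a.e.). -/
theorem stmt0 {X : Type*} [MeasurableSpace X]
    (σ : X → X) (hσ : Measurable σ) (hσonto : Function.Surjective σ)
    (R : (X → ℝ) → (X → ℝ))
    (hRmeas : ∀ f, Measurable f → Measurable (R f))
    (hRpos : ∀ f, (∀ x, 0 ≤ f x) → ∀ x, 0 ≤ R f x)
    (hRadd : ∀ f g, R (f + g) = R f + R g)
    (hRsmul : ∀ (c : ℝ) (f), R (fun x => c * f x) = fun x => c * R f x)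
    (hRone : R (fun _ => 1) = fun _ => 1)
    (hpull : ∀ f g, Measurable f → Measurable g →
      R (fun x => f (σ x) * g x) = fun x => f x * R g x)
    (lam mu lamR muR : Measure X)
    [IsProbabilityMeasure lam] [IsProbabilityMeasure mu]
    (hlamR : ∀ f : X → ℝ, Measurable f → (∃ C, ∀ x, |f x| ≤ C) →
      ∫ x, f x ∂lamR = ∫ x, R f x ∂lam)
    (hmuR : ∀ f : X → ℝ, Measurable f → (∃ C, ∀ x, |f x| ≤ C) →
      ∫ x, f x ∂muR = ∫ x, R f x ∂mu)
    (hac : lam ≪ mu) :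
    lamR ≪ muR ∧
      lamR.rnDeriv muR =ᵐ[muR] fun x => lam.rnDeriv mu (σ x) :=
  stmt0_general σ hσ R hRmeas hRpos hRadd hRone hpull lam mu lamR muR hlamR hmuR hac
end

section
/- Let R be the operator on functions on the open unit interval (0,1) defined by (Rf)(x) = (1/2)( (1/x)∫₀ˣ f(t) dt + (1/(1−x))∫ₓ¹ f(t) dt ). Then the probability measure dλ(x) = dx/(π√(x(1−x))) on (0,1) satisfies λR = λ, i.e., ∫₀¹ (Rf)(x) dλ(x) = ∫₀¹ f(x) dλ(x) for all bounded measurable f on (0,1). -/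
/-!
Write `w` for the arcsine density. Fubini on the triangles `{t < x}` and `{x < t}` of `(0,1)²`
turns `∫ w · Rf` into `∫ (k t + k (1 - t)) f t dt`, where `k t = ∫ₜ¹ w x / (2x) dx = √(1-t) / (π√t)`
and `∫₀ᵗ w x / (2(1-x)) dx = k (1 - t)`; and `k t + k (1 - t) = w t` is an algebraic identity.
The singular integrands need no separate integrability estimates: they are nonnegative
derivatives (of `arcsin (2x - 1) / π` and of `-k`) of functions continuous up to the endpoints.
-/

open MeasureTheory Set Real

noncomputable def Rop (f : ℝ → ℝ) (x : ℝ) : ℝ :=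
  (1 / 2) * ((1 / x) * ∫ t in Set.Ioo (0 : ℝ) x, f t
    + (1 / (1 - x)) * ∫ t in Set.Ioo x (1 : ℝ), f t)

noncomputable def arcsine : Measure ℝ :=
  (volume.restrict (Set.Ioo (0 : ℝ) 1)).withDensity
    (fun x => ENNReal.ofReal (1 / (Real.pi * Real.sqrt (x * (1 - x)))))

-- In `Rop`, the integral `∫ t in Ioo 0 x, f t + ...` extends over the second summand too; that
-- summand is constant in `t`, so it only picks up a factor `x`.
lemma Rop_eq {f : ℝ → ℝ} {x : ℝ} (hx : 0 < x) (hf : IntegrableOn f (Ioo 0 x)) :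
    Rop f x = (1 / 2) * ((1 / x) * (∫ t in Ioo 0 x, f t)
      + (1 / (1 - x)) * ∫ t in Ioo x 1, f t) := by
  rw [Rop, integral_add hf (integrableOn_const (by simp)), setIntegral_const,
    volume_real_Ioo_of_le hx.le, smul_eq_mul, sub_zero]
  field_simp

theorem integrableOn_Ioo_and_integral_eq_sub_of_hasDerivAt_of_nonneg {a b : ℝ} (hab : a ≤ b)
    {F g : ℝ → ℝ} (hcont : ContinuousOn F (Icc a b))
    (hderiv : ∀ x ∈ Ioo a b, HasDerivAt F (g x) x) (hg : ∀ x ∈ Ioo a b, 0 ≤ g x) :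
    IntegrableOn g (Ioo a b) ∧ ∫ x in Ioo a b, g x = F b - F a := by
  have hint : IntegrableOn g (Ioc a b) :=
    intervalIntegral.integrableOn_deriv_of_nonneg hcont hderiv hg
  refine ⟨hint.mono_set Ioo_subset_Ioc_self, ?_⟩
  rw [← integral_Ioc_eq_integral_Ioo, ← intervalIntegral.integral_of_le hab]
  exact intervalIntegral.integral_eq_sub_of_hasDerivAt_of_le hab hcont hderiv
    ((intervalIntegrable_iff_integrableOn_Ioc_of_le hab).2 hint)

section Fubini

variable {α β : Type*} [MeasurableSpace α] [MeasurableSpace β] {μ : Measure α} {ν : Measure β}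
  [SFinite μ] [SFinite ν] {S : Set (α × β)} {c : α → ℝ} {f : β → ℝ}

theorem integrable_indicator_mul_of_bounded (hS : MeasurableSet S) (hc : Measurable c)
    (hf : Measurable f) {C : ℝ} (hfC : ∀ t, |f t| ≤ C) (hc0 : ∀ᵐ x ∂μ, 0 ≤ c x)
    (hslice : ∀ᵐ t ∂ν, IntegrableOn c ((·, t) ⁻¹' S) μ)
    (hK : Integrable (fun t => ∫ x in (·, t) ⁻¹' S, c x ∂μ) ν) :
    Integrable (S.indicator fun p => c p.1 * f p.2) (μ.prod ν) := by
  have hmeas : Measurable (S.indicator fun p : α × β => c p.1 * f p.2) :=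
    ((hc.comp measurable_fst).mul (hf.comp measurable_snd)).indicator hS
  have hnorm : ∀ t, ∫ x, ‖S.indicator (fun p => c p.1 * f p.2) (x, t)‖ ∂μ
      = (∫ x in (·, t) ⁻¹' S, c x ∂μ) * ‖f t‖ := by
    intro t
    have hc0' : ∀ᵐ x ∂μ.restrict ((·, t) ⁻¹' S), ‖c x‖ * ‖f t‖ = c x * ‖f t‖ := by
      filter_upwards [ae_restrict_of_ae hc0] with x hx
      rw [norm_of_nonneg hx]
    simp_rw [norm_indicator_eq_indicator_norm, norm_mul]
    rw [← integral_mul_const, ← integral_congr_ae hc0',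
      ← integral_indicator (measurable_prodMk_right hS)]
    rfl
  rw [integrable_prod_iff' hmeas.aestronglyMeasurable]
  refine ⟨?_, ?_⟩
  · filter_upwards [hslice] with t ht
    exact IntegrableOn.integrable_indicator (ht.mul_const (f t)) (measurable_prodMk_right hS)
  · simp_rw [hnorm]
    exact hK.mul_bdd hf.norm.aestronglyMeasurable
      (.of_forall fun t => by simpa using hfC t)

theorem integral_mul_setIntegral_comm (hS : MeasurableSet S)
    (hcf : Integrable (S.indicator fun p => c p.1 * f p.2) (μ.prod ν)) :
    Integrable (fun x => c x * ∫ t in Prod.mk x ⁻¹' S, f t ∂ν) μ ∧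
      ∫ x, c x * ∫ t in Prod.mk x ⁻¹' S, f t ∂ν ∂μ
        = ∫ t, (∫ x in (·, t) ⁻¹' S, c x ∂μ) * f t ∂ν := by
  have hleft : ∀ x, ∫ t, S.indicator (fun p => c p.1 * f p.2) (x, t) ∂ν
      = c x * ∫ t in Prod.mk x ⁻¹' S, f t ∂ν := by
    intro x
    rw [← integral_const_mul, ← integral_indicator (measurable_prodMk_left hS)]
    rfl
  have hright : ∀ t, ∫ x, S.indicator (fun p => c p.1 * f p.2) (x, t) ∂μ
      = (∫ x in (·, t) ⁻¹' S, c x ∂μ) * f t := by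
    intro t
    rw [← integral_mul_const, ← integral_indicator (measurable_prodMk_right hS)]
    rfl
  refine ⟨?_, ?_⟩
  · simpa only [hleft] using hcf.integral_prod_left
  · simp_rw [← hleft, ← hright]
    exact integral_integral_swap hcf

end Fubini

lemma restrict_Ioo_zero_one_restrict_Iio {x : ℝ} (hx : x ≤ 1) :
    (volume.restrict (Ioo 0 1)).restrict (Iio x) = volume.restrict (Ioo 0 x) := by
  rw [Measure.restrict_restrict measurableSet_Iio, Iio_inter_Ioo, min_eq_left hx]

lemma restrict_Ioo_zero_one_restrict_Ioi {t : ℝ} (ht : 0 ≤ t) :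
    (volume.restrict (Ioo 0 1)).restrict (Ioi t) = volume.restrict (Ioo t 1) := by
  rw [Measure.restrict_restrict measurableSet_Ioi, Ioi_inter_Ioo, max_eq_left ht]

theorem integrableOn_and_integral_mul_setIntegral_Ioo_eq {S : Set (ℝ × ℝ)} (hS : MeasurableSet S)
    {I J : ℝ → Set ℝ}
    (hI : ∀ x ∈ Ioo 0 1, (volume.restrict (Ioo 0 1)).restrict (Prod.mk x ⁻¹' S)
      = volume.restrict (I x))
    (hJ : ∀ t ∈ Ioo 0 1, (volume.restrict (Ioo 0 1)).restrict ((·, t) ⁻¹' S)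
      = volume.restrict (J t))
    {c K : ℝ → ℝ} (hc : Measurable c) (hc0 : ∀ x ∈ Ioo 0 1, 0 ≤ c x)
    (hcK : ∀ t ∈ Ioo 0 1, IntegrableOn c (J t) ∧ ∫ x in J t, c x = K t)
    (hK : IntegrableOn K (Ioo 0 1)) {f : ℝ → ℝ} (hf : Measurable f) {C : ℝ}
    (hfC : ∀ t, |f t| ≤ C) :
    IntegrableOn (fun x => c x * ∫ t in I x, f t) (Ioo 0 1) ∧
      IntegrableOn (fun t => K t * f t) (Ioo 0 1) ∧
      ∫ x in Ioo 0 1, c x * ∫ t in I x, f t = ∫ t in Ioo 0 1, K t * f t := by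
  have hcol : ∀ t ∈ Ioo (0 : ℝ) 1, IntegrableOn c ((·, t) ⁻¹' S) (volume.restrict (Ioo 0 1)) ∧
      ∫ x in (·, t) ⁻¹' S, c x ∂volume.restrict (Ioo 0 1) = K t := by
    intro t ht
    rw [IntegrableOn, hJ t ht]
    exact hcK t ht
  obtain ⟨hint, heq⟩ := integral_mul_setIntegral_comm hS <|
    integrable_indicator_mul_of_bounded hS hc hf hfC
      ((ae_restrict_mem measurableSet_Ioo).mono hc0)
      ((ae_restrict_mem measurableSet_Ioo).mono fun t ht => (hcol t ht).1)
      (hK.congr_fun (fun t ht => (hcol t ht).2.symm) measurableSet_Ioo)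
  have hrow : ∀ᵐ x ∂volume.restrict (Ioo 0 1),
      c x * ∫ t in Prod.mk x ⁻¹' S, f t ∂volume.restrict (Ioo 0 1) = c x * ∫ t in I x, f t := by
    filter_upwards [ae_restrict_mem measurableSet_Ioo] with x hx
    rw [hI x hx]
  have hkernel : ∀ᵐ t ∂volume.restrict (Ioo 0 1),
      (∫ x in (·, t) ⁻¹' S, c x ∂volume.restrict (Ioo 0 1)) * f t = K t * f t := by
    filter_upwards [ae_restrict_mem measurableSet_Ioo] with t ht
    rw [(hcol t ht).2]
  exact ⟨hint.congr hrow,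
    hK.mul_bdd hf.aestronglyMeasurable (.of_forall hfC),
    (integral_congr_ae hrow).symm.trans (heq.trans (integral_congr_ae hkernel))⟩

noncomputable def arcsineDensity (x : ℝ) : ℝ := 1 / (π * √(x * (1 - x)))

lemma arcsineDensity_nonneg (x : ℝ) : 0 ≤ arcsineDensity x := by
  unfold arcsineDensity; positivity

lemma measurable_arcsineDensity : Measurable arcsineDensity := by
  unfold arcsineDensity; fun_prop

lemma arcsineDensity_one_sub (x : ℝ) : arcsineDensity (1 - x) = arcsineDensity x := by
  unfold arcsineDensity; ring_nf

lemma hasDerivAt_arcsin_two_mul_sub_one_div_pi {x : ℝ} (hx : x ∈ Ioo 0 1) :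
    HasDerivAt (fun y => arcsin (2 * y - 1) / π) (arcsineDensity x) x := by
  obtain ⟨hx0, hx1⟩ := hx
  have hlin : HasDerivAt (fun y : ℝ => 2 * y - 1) 2 x := by
    simpa using ((hasDerivAt_id x).const_mul 2).sub_const 1
  have := ((hasDerivAt_arcsin (by nlinarith) (by nlinarith)).comp x hlin).div_const π
  refine this.congr_deriv ?_
  rw [show 1 - (2 * x - 1) ^ 2 = 2 ^ 2 * (x * (1 - x)) by ring, sqrt_mul (by norm_num),
    sqrt_sq (by norm_num), arcsineDensity]
  have : 0 < √(x * (1 - x)) := sqrt_pos.2 (by nlinarith)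
  field_simp

lemma integrableOn_arcsineDensity_and_integral_eq_one :
    IntegrableOn arcsineDensity (Ioo 0 1) ∧ ∫ x in Ioo 0 1, arcsineDensity x = 1 := by
  have h := integrableOn_Ioo_and_integral_eq_sub_of_hasDerivAt_of_nonneg zero_le_one
    (by fun_prop) (fun x hx => hasDerivAt_arcsin_two_mul_sub_one_div_pi hx)
    (fun x _ => arcsineDensity_nonneg x)
  refine ⟨h.1, h.2.trans ?_⟩
  norm_num [arcsin_one, arcsin_neg_one]
  field_simp
  norm_num

noncomputable def arcsineKernel (t : ℝ) : ℝ := √(1 - t) / (π * √t)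

lemma arcsineKernel_nonneg (t : ℝ) : 0 ≤ arcsineKernel t := by
  unfold arcsineKernel; positivity

lemma measurable_arcsineKernel : Measurable arcsineKernel := by
  unfold arcsineKernel; fun_prop

lemma arcsineKernel_add_arcsineKernel_one_sub {t : ℝ} (ht : t ∈ Ioo 0 1) :
    arcsineKernel t + arcsineKernel (1 - t) = arcsineDensity t := by
  obtain ⟨ht0, ht1⟩ := ht
  have h0 : 0 < √t := sqrt_pos.2 ht0
  have h1 : 0 < √(1 - t) := sqrt_pos.2 (by linarith)
  rw [arcsineKernel, arcsineKernel, arcsineDensity, sub_sub_cancel, sqrt_mul ht0.le]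
  field_simp
  rw [sq_sqrt ht0.le, sq_sqrt (by linarith)]
  ring

lemma continuousOn_arcsineKernel : ContinuousOn arcsineKernel (Ioi 0) := by
  unfold arcsineKernel
  refine ContinuousOn.div (by fun_prop) (by fun_prop) fun x hx => ?_
  have : 0 < √x := sqrt_pos.2 hx
  positivity

lemma hasDerivAt_arcsineKernel {x : ℝ} (hx : x ∈ Ioo 0 1) :
    HasDerivAt arcsineKernel (-(arcsineDensity x / (2 * x))) x := by
  obtain ⟨hx0, hx1⟩ := hx
  have h0 : 0 < √x := sqrt_pos.2 hx0
  have h1 : 0 < √(1 - x) := sqrt_pos.2 (by linarith)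
  have hnum : HasDerivAt (fun y => √(1 - y)) (-1 / (2 * √(1 - x))) x := by
    simpa using ((hasDerivAt_id x).const_sub 1).sqrt (by simp; linarith)
  have := hnum.div ((hasDerivAt_sqrt hx0.ne').const_mul π) (by positivity)
  refine this.congr_deriv ?_
  rw [arcsineDensity, sqrt_mul hx0.le]
  field_simp
  rw [sq_sqrt hx0.le, sq_sqrt (by linarith)]
  ring

lemma integrableOn_and_integral_arcsineDensity_div_two_mul {t : ℝ} (ht : t ∈ Ioo 0 1) :
    IntegrableOn (fun x => arcsineDensity x / (2 * x)) (Ioo t 1) ∧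
      ∫ x in Ioo t 1, arcsineDensity x / (2 * x) = arcsineKernel t := by
  have h := integrableOn_Ioo_and_integral_eq_sub_of_hasDerivAt_of_nonneg ht.2.le
    (F := fun y => -arcsineKernel y)
    (continuousOn_arcsineKernel.mono fun x hx => ht.1.trans_le hx.1).neg
    (fun x hx => (hasDerivAt_arcsineKernel ⟨ht.1.trans hx.1, hx.2⟩).neg.congr_deriv (neg_neg _))
    (fun x hx => by have := arcsineDensity_nonneg x; have := ht.1.trans hx.1; positivity)
  exact ⟨h.1, h.2.trans (by simp [arcsineKernel])⟩

lemma integrableOn_and_integral_arcsineDensity_div_two_mul_one_sub {t : ℝ} (ht : t ∈ Ioo 0 1) :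
    IntegrableOn (fun x => arcsineDensity x / (2 * (1 - x))) (Ioo 0 t) ∧
      ∫ x in Ioo 0 t, arcsineDensity x / (2 * (1 - x)) = arcsineKernel (1 - t) := by
  have h := integrableOn_Ioo_and_integral_eq_sub_of_hasDerivAt_of_nonneg ht.1.le
    (F := fun y => arcsineKernel (1 - y))
    (continuousOn_arcsineKernel.comp (by fun_prop) fun x hx => sub_pos.2 (hx.2.trans_lt ht.2))
    (fun x hx => by
      have hx' : 1 - x ∈ Ioo 0 1 := ⟨sub_pos.2 (hx.2.trans ht.2), by linarith [hx.1]⟩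
      simpa [arcsineDensity_one_sub] using (hasDerivAt_arcsineKernel hx').comp_const_sub 1 x)
    (fun x hx => by
      have := arcsineDensity_nonneg x; have := sub_pos.2 (hx.2.trans ht.2); positivity)
  exact ⟨h.1, h.2.trans (by simp [arcsineKernel])⟩

lemma arcsineKernel_le_arcsineDensity {t : ℝ} (ht : t ∈ Ioo 0 1) :
    arcsineKernel t ≤ arcsineDensity t := by
  rw [← arcsineKernel_add_arcsineKernel_one_sub ht]
  exact le_add_of_nonneg_right (arcsineKernel_nonneg _)

lemma arcsineKernel_one_sub_le_arcsineDensity {t : ℝ} (ht : t ∈ Ioo 0 1) :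
    arcsineKernel (1 - t) ≤ arcsineDensity t := by
  rw [← arcsineKernel_add_arcsineKernel_one_sub ht]
  exact le_add_of_nonneg_left (arcsineKernel_nonneg _)

lemma integrableOn_Ioo_of_le_arcsineDensity {g : ℝ → ℝ} (hg : Measurable g) (hg0 : ∀ t, 0 ≤ g t)
    (hle : ∀ t ∈ Ioo 0 1, g t ≤ arcsineDensity t) : IntegrableOn g (Ioo 0 1) := by
  refine integrableOn_arcsineDensity_and_integral_eq_one.1.mono' hg.aestronglyMeasurable ?_
  filter_upwards [ae_restrict_mem measurableSet_Ioo] with t ht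
  rw [norm_of_nonneg (hg0 t)]
  exact hle t ht

lemma integrableOn_and_integral_arcsineDensity_div_two_mul_mul_integral
    {f : ℝ → ℝ} (hf : Measurable f) {C : ℝ} (hfC : ∀ t, |f t| ≤ C) :
    IntegrableOn (fun x => arcsineDensity x / (2 * x) * ∫ t in Ioo 0 x, f t) (Ioo 0 1) ∧
      IntegrableOn (fun t => arcsineKernel t * f t) (Ioo 0 1) ∧
      ∫ x in Ioo 0 1, arcsineDensity x / (2 * x) * ∫ t in Ioo 0 x, f t
        = ∫ t in Ioo 0 1, arcsineKernel t * f t :=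
  integrableOn_and_integral_mul_setIntegral_Ioo_eq (S := {p | p.2 < p.1})
    (measurableSet_lt measurable_snd measurable_fst)
    (fun x hx => restrict_Ioo_zero_one_restrict_Iio hx.2.le)
    (fun t ht => restrict_Ioo_zero_one_restrict_Ioi ht.1.le)
    (measurable_arcsineDensity.div (by fun_prop))
    (fun x hx => div_nonneg (arcsineDensity_nonneg x) (by linarith [hx.1]))
    (fun t ht => integrableOn_and_integral_arcsineDensity_div_two_mul ht)
    (integrableOn_Ioo_of_le_arcsineDensity measurable_arcsineKernel arcsineKernel_nonneg
      fun t ht => arcsineKernel_le_arcsineDensity ht)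
    hf hfC

lemma integrableOn_and_integral_arcsineDensity_div_two_mul_one_sub_mul_integral
    {f : ℝ → ℝ} (hf : Measurable f) {C : ℝ} (hfC : ∀ t, |f t| ≤ C) :
    IntegrableOn (fun x => arcsineDensity x / (2 * (1 - x)) * ∫ t in Ioo x 1, f t) (Ioo 0 1) ∧
      IntegrableOn (fun t => arcsineKernel (1 - t) * f t) (Ioo 0 1) ∧
      ∫ x in Ioo 0 1, arcsineDensity x / (2 * (1 - x)) * ∫ t in Ioo x 1, f t
        = ∫ t in Ioo 0 1, arcsineKernel (1 - t) * f t :=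
  integrableOn_and_integral_mul_setIntegral_Ioo_eq (S := {p | p.1 < p.2})
    (measurableSet_lt measurable_fst measurable_snd)
    (fun x hx => restrict_Ioo_zero_one_restrict_Ioi hx.1.le)
    (fun t ht => restrict_Ioo_zero_one_restrict_Iio ht.2.le)
    (measurable_arcsineDensity.div (by fun_prop))
    (fun x hx => div_nonneg (arcsineDensity_nonneg x) (by linarith [hx.2]))
    (fun t ht => integrableOn_and_integral_arcsineDensity_div_two_mul_one_sub ht)
    (integrableOn_Ioo_of_le_arcsineDensity (measurable_arcsineKernel.comp (by fun_prop))
      (fun t => arcsineKernel_nonneg _) fun t ht => arcsineKernel_one_sub_le_arcsineDensity ht)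
    hf hfC

lemma arcsine_eq_withDensity :
    arcsine = (volume.restrict (Ioo 0 1)).withDensity fun x => ENNReal.ofReal (arcsineDensity x) :=
  rfl

lemma integral_arcsine (g : ℝ → ℝ) :
    ∫ x, g x ∂arcsine = ∫ x in Ioo 0 1, arcsineDensity x * g x := by
  rw [arcsine_eq_withDensity, integral_withDensity_eq_integral_toReal_smul
    (measurable_arcsineDensity.ennreal_ofReal) (by simp)]
  simp_rw [ENNReal.toReal_ofReal (arcsineDensity_nonneg _), smul_eq_mul]

lemma isProbabilityMeasure_arcsine : IsProbabilityMeasure arcsine := by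
  obtain ⟨hint, hone⟩ := integrableOn_arcsineDensity_and_integral_eq_one
  constructor
  rw [arcsine_eq_withDensity, withDensity_apply _ MeasurableSet.univ, Measure.restrict_univ]
  rw [← ofReal_integral_eq_lintegral_ofReal hint (.of_forall arcsineDensity_nonneg), hone,
    ENNReal.ofReal_one]

/-- the arcsine distribution is a probability measure with `λR = λ`,
i.e. `∫ Rf dλ = ∫ f dλ` for all bounded measurable `f`. -/
theorem stmt1 :
    IsProbabilityMeasure arcsine ∧
    ∀ f : ℝ → ℝ, Measurable f → (∃ C, ∀ x, |f x| ≤ C) →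
      ∫ x, Rop f x ∂arcsine = ∫ x, f x ∂arcsine := by
  refine ⟨isProbabilityMeasure_arcsine, fun f hf ⟨C, hfC⟩ => ?_⟩
  obtain ⟨hint₁, hKf₁, heq₁⟩ :=
    integrableOn_and_integral_arcsineDensity_div_two_mul_mul_integral hf hfC
  obtain ⟨hint₂, hKf₂, heq₂⟩ :=
    integrableOn_and_integral_arcsineDensity_div_two_mul_one_sub_mul_integral hf hfC
  rw [integral_arcsine, integral_arcsine]
  calc ∫ x in Ioo 0 1, arcsineDensity x * Rop f x
      = ∫ x in Ioo 0 1, (arcsineDensity x / (2 * x) * (∫ t in Ioo 0 x, f t)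
          + arcsineDensity x / (2 * (1 - x)) * ∫ t in Ioo x 1, f t) := by
        refine setIntegral_congr_fun measurableSet_Ioo fun x hx => ?_
        rw [Rop_eq hx.1 (Measure.integrableOn_of_bounded (by simp) hf.aestronglyMeasurable
          (.of_forall hfC))]
        simp only [div_eq_mul_inv, mul_inv]
        ring
    _ = (∫ t in Ioo 0 1, arcsineKernel t * f t) + ∫ t in Ioo 0 1, arcsineKernel (1 - t) * f t := by
        rw [integral_add hint₁ hint₂, heq₁, heq₂]
    _ = ∫ t in Ioo 0 1, arcsineDensity t * f t := by
        rw [← integral_add hKf₁ hKf₂]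
        refine setIntegral_congr_fun measurableSet_Ioo fun t ht => ?_
        rw [← add_mul, arcsineKernel_add_arcsineKernel_one_sub ht]
end

section
/- Let (X,𝓑) be a measurable space, σ : X → X measurable and onto, R a positive linear operator on bounded measurable functions with R1 = 1 and R((f∘σ)g) = f R(g). If λ is a probability measure on X such that λ = νR for some probability measure ν (equivalently (λ∘σ⁻¹)R = λ), then for all bounded measurable f₁, f₂: ∫ (R(f₁)∘σ)·f₂ dλ = ∫ f₁·(R(f₂)∘σ) dλ. -/
open MeasureTheory

/-- if `λ = νR` for some probability measure `ν`, then the map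
`f ↦ R(f)∘σ` is symmetric: `∫ (R f₁ ∘ σ)·f₂ dλ = ∫ f₁·(R f₂ ∘ σ) dλ`. -/
theorem stmt3 {X : Type*} [MeasurableSpace X]
    (σ : X → X) (hσ : Measurable σ) (hσonto : Function.Surjective σ)
    (R : (X → ℝ) → (X → ℝ))
    (hRmeas : ∀ f, Measurable f → Measurable (R f))
    (hRpos : ∀ f, (∀ x, 0 ≤ f x) → ∀ x, 0 ≤ R f x)
    (hRadd : ∀ f g, R (f + g) = R f + R g)
    (hRsmul : ∀ (c : ℝ) (f), R (fun x => c * f x) = fun x => c * R f x)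
    (hRone : R (fun _ => 1) = fun _ => 1)
    (hpull : ∀ f g, Measurable f → Measurable g →
      R (fun x => f (σ x) * g x) = fun x => f x * R g x)
    (lam ν : Measure X) [IsProbabilityMeasure lam] [IsProbabilityMeasure ν]
    (hlam : ∀ f : X → ℝ, Measurable f → (∃ C, ∀ x, |f x| ≤ C) →
      ∫ x, f x ∂lam = ∫ x, R f x ∂ν) :
    ∀ f₁ f₂ : X → ℝ, Measurable f₁ → Measurable f₂ →
      (∃ C, ∀ x, |f₁ x| ≤ C) → (∃ C, ∀ x, |f₂ x| ≤ C) →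
      ∫ x, R f₁ (σ x) * f₂ x ∂lam = ∫ x, f₁ x * R f₂ (σ x) ∂lam := by
  -- R of a constant is that constant
  have hconst : ∀ c : ℝ, R (fun _ => c) = fun _ => c := by
    intro c
    have h := hRsmul c (fun _ => 1)
    simp only [mul_one, hRone] at h
    exact h
  -- R is monotone
  have hmono : ∀ f g : X → ℝ, (∀ x, f x ≤ g x) → ∀ x, R f x ≤ R g x := by
    intro f g h x
    have hdecomp : (fun y => g y - f y) + f = g := by
      funext y; simp
    have hadd := hRadd (fun y => g y - f y) f
    rw [hdecomp] at hadd
    have hpos := hRpos (fun y => g y - f y) (fun y => sub_nonneg.mpr (h y)) x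
    have : R g x = R (fun y => g y - f y) x + R f x := by
      rw [hadd]; rfl
    linarith
  -- R preserves bounds
  have hbound : ∀ (f : X → ℝ) (C : ℝ), (∀ x, |f x| ≤ C) → ∀ x, |R f x| ≤ C := by
    intro f C hC x
    have h1 : ∀ y, f y ≤ C := fun y => (abs_le.mp (hC y)).2
    have h2 : ∀ y, (-C : ℝ) ≤ f y := fun y => (abs_le.mp (hC y)).1
    have hu := hmono f (fun _ => C) h1 x
    have hl := hmono (fun _ => -C) f h2 x
    rw [hconst] at hu hl
    exact abs_le.mpr ⟨hl, hu⟩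
  intro f₁ f₂ hf₁ hf₂ ⟨C₁, hC₁⟩ ⟨C₂, hC₂⟩
  have hRf₁ := hRmeas f₁ hf₁
  have hRf₂ := hRmeas f₂ hf₂
  have hB₁ := hbound f₁ C₁ hC₁
  have hB₂ := hbound f₂ C₂ hC₂
  have habs : ∀ (a b A B : ℝ), |a| ≤ A → |b| ≤ B → |a * b| ≤ A * B := by
    intro a b A B ha hb
    rw [abs_mul]
    exact mul_le_mul ha hb (abs_nonneg b) ((abs_nonneg a).trans ha)
  have e1 : ∫ x, R f₁ (σ x) * f₂ x ∂lam = ∫ x, R f₁ x * R f₂ x ∂ν := by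
    rw [hlam (fun x => R f₁ (σ x) * f₂ x) ((hRf₁.comp hσ).mul hf₂)
      ⟨C₁ * C₂, fun x => habs _ _ _ _ (hB₁ (σ x)) (hC₂ x)⟩]
    rw [hpull (R f₁) f₂ hRf₁ hf₂]
  have e2 : ∫ x, f₁ x * R f₂ (σ x) ∂lam = ∫ x, R f₂ x * R f₁ x ∂ν := by
    have : ∫ x, f₁ x * R f₂ (σ x) ∂lam = ∫ x, R f₂ (σ x) * f₁ x ∂lam := by
      simp_rw [mul_comm]
    rw [this, hlam (fun x => R f₂ (σ x) * f₁ x) ((hRf₂.comp hσ).mul hf₁)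
      ⟨C₂ * C₁, fun x => habs _ _ _ _ (hB₂ (σ x)) (hC₁ x)⟩]
    rw [hpull (R f₂) f₁ hRf₂ hf₁]
  rw [e1, e2]
  simp_rw [mul_comm]
end

section
/- Let R be the operator (Rf)(x) = (1/2)( (1/x)∫₀ˣ f + (1/(1−x))∫ₓ¹ f ) on bounded measurable functions on (0,1). Then there is NO measurable map σ : (0,1) → (0,1) such that R((f∘σ)g) = f·R(g) for all bounded measurable f, g on (0,1). In particular, if such σ existed, taking g = 1 and f(x) = xⁿ would force ∫₀¹ (2σ(t))ⁿ dt = 1 for all n ≥ 0, implying σ ≡ 1/2 a.e., a contradiction. -/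
open MeasureTheory

lemma Rop_eq_of_integrableOn {f : ℝ → ℝ} {x : ℝ} (hx : 0 < x)
    (hf : IntegrableOn f (Set.Ioo 0 x)) :
    Rop f x = (1 / 2) * ((1 / x) * (∫ t in Set.Ioo 0 x, f t)
      + (1 / (1 - x)) * ∫ t in Set.Ioo x 1, f t) := by
  -- the binder of the first integral in `Rop` extends over the second one, a constant in `t`
  rw [Rop, integral_add hf (integrableOn_const (by simp)), setIntegral_const,
    Real.volume_real_Ioo_of_le hx.le, smul_eq_mul]
  field_simp
  ring

lemma Rop_const (c : ℝ) {x : ℝ} (hx : x ∈ Set.Ioo (0 : ℝ) 1) : Rop (fun _ => c) x = c := by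
  obtain ⟨hx0, hx1⟩ := hx
  rw [Rop_eq_of_integrableOn hx0 (integrableOn_const (by simp)), setIntegral_const,
    setIntegral_const, Real.volume_real_Ioo_of_le hx0.le, Real.volume_real_Ioo_of_le hx1.le]
  field_simp [(sub_pos.2 hx1).ne']
  ring

section UnitIntervalValued

variable {h : ℝ → ℝ} (hm : Measurable h) (h01 : ∀ t, h t ∈ Set.Icc (0 : ℝ) 1)
include hm h01

lemma integrableOn_Ioo_of_mem_Icc (a b : ℝ) : IntegrableOn h (Set.Ioo a b) :=
  Measure.integrableOn_of_bounded (M := 1) (by simp) hm.aestronglyMeasurable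
    (ae_of_all _ fun t => by simpa [abs_le] using ⟨by linarith [(h01 t).1], (h01 t).2⟩)

lemma setIntegral_Ioo_le_sub {a b : ℝ} (hab : a ≤ b) : ∫ t in Set.Ioo a b, h t ≤ b - a := by
  calc ∫ t in Set.Ioo a b, h t ≤ ∫ _ in Set.Ioo a b, (1 : ℝ) :=
        setIntegral_mono_on (integrableOn_Ioo_of_mem_Icc hm h01 a b)
          (integrableOn_const (by simp)) measurableSet_Ioo fun t _ => (h01 t).2
    _ = b - a := by simp [Real.volume_real_Ioo_of_le hab]

lemma setIntegral_Ioo_zero_eq_of_Rop_eq_one {x : ℝ} (hx : x ∈ Set.Ioo (0 : ℝ) 1)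
    (hR : Rop h x = 1) : ∫ t in Set.Ioo 0 x, h t = x := by
  obtain ⟨hx0, hx1⟩ := hx
  rw [Rop_eq_of_integrableOn hx0 (integrableOn_Ioo_of_mem_Icc hm h01 0 x)] at hR
  have hA : 1 / x * ∫ t in Set.Ioo 0 x, h t ≤ 1 := by
    rw [one_div_mul_eq_div, div_le_one hx0]
    simpa using setIntegral_Ioo_le_sub hm h01 hx0.le
  have hB : 1 / (1 - x) * ∫ t in Set.Ioo x 1, h t ≤ 1 := by
    rw [one_div_mul_eq_div, div_le_one (sub_pos.2 hx1)]
    exact setIntegral_Ioo_le_sub hm h01 hx1.le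
  have hA1 : 1 / x * ∫ t in Set.Ioo 0 x, h t = 1 := by linarith
  rwa [one_div_mul_eq_div, div_eq_one_iff_eq hx0.ne'] at hA1

lemma setIntegral_Ioo_zero_eq_zero_of_Rop_eq_zero {x : ℝ} (hx : x ∈ Set.Ioo (0 : ℝ) 1)
    (hR : Rop h x = 0) : ∫ t in Set.Ioo 0 x, h t = 0 := by
  obtain ⟨hx0, hx1⟩ := hx
  rw [Rop_eq_of_integrableOn hx0 (integrableOn_Ioo_of_mem_Icc hm h01 0 x)] at hR
  have hA : 0 ≤ 1 / x * ∫ t in Set.Ioo 0 x, h t :=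
    mul_nonneg (by positivity) (setIntegral_nonneg measurableSet_Ioo fun t _ => (h01 t).1)
  have hB : 0 ≤ 1 / (1 - x) * ∫ t in Set.Ioo x 1, h t :=
    mul_nonneg (one_div_nonneg.2 (sub_pos.2 hx1).le)
      (setIntegral_nonneg measurableSet_Ioo fun t _ => (h01 t).1)
  have hA0 : 1 / x * ∫ t in Set.Ioo 0 x, h t = 0 := by linarith
  exact (mul_eq_zero.1 hA0).resolve_left (by positivity)

end UnitIntervalValued

/-- there is NO measurable endomorphism `σ` of `(0,1)` for which the
pull-out identity `R((f∘σ)g) = f·R(g)` holds on `(0,1)` for all bounded measurable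
`f, g`. -/
theorem stmt10 :
    ¬ ∃ σ : ℝ → ℝ, Measurable σ ∧ (∀ x ∈ Set.Ioo (0 : ℝ) 1, σ x ∈ Set.Ioo (0 : ℝ) 1) ∧
      ∀ f g : ℝ → ℝ, Measurable f → Measurable g →
        (∃ C, ∀ x, |f x| ≤ C) → (∃ C, ∀ x, |g x| ≤ C) →
        ∀ x ∈ Set.Ioo (0 : ℝ) 1, Rop (fun t => f (σ t) * g t) x = f x * Rop g x := by
  rintro ⟨σ, hσ, -, H⟩
  set f : ℝ → ℝ := (Set.Iio (1 / 2 : ℝ)).indicator fun _ => 1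
  have hf01 : ∀ x, f x ∈ Set.Icc (0 : ℝ) 1 := fun x => by
    simp only [f, Set.indicator_apply]
    split_ifs <;> norm_num
  have hfm : Measurable f := measurable_const.indicator measurableSet_Iio
  have hRf : ∀ x ∈ Set.Ioo (0 : ℝ) 1, Rop (fun t => f (σ t)) x = f x := fun x hx => by
    simpa [Rop_const 1 hx] using H f (fun _ => 1) hfm measurable_const
      ⟨1, fun x => abs_le.2 ⟨by linarith [(hf01 x).1], (hf01 x).2⟩⟩ ⟨1, by simp⟩ x hx
  have hfσ01 : ∀ t, f (σ t) ∈ Set.Icc (0 : ℝ) 1 := fun t => hf01 (σ t)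
  have h14 : ∫ t in Set.Ioo 0 (1 / 4 : ℝ), f (σ t) = 1 / 4 :=
    setIntegral_Ioo_zero_eq_of_Rop_eq_one (hfm.comp hσ) hfσ01 (by norm_num)
      ((hRf _ (by norm_num)).trans (by norm_num [f]))
  have h34 : ∫ t in Set.Ioo 0 (3 / 4 : ℝ), f (σ t) = 0 :=
    setIntegral_Ioo_zero_eq_zero_of_Rop_eq_zero (hfm.comp hσ) hfσ01 (by norm_num)
      ((hRf _ (by norm_num)).trans (by norm_num [f]))
  have hmono : ∫ t in Set.Ioo 0 (1 / 4 : ℝ), f (σ t) ≤ ∫ t in Set.Ioo 0 (3 / 4 : ℝ), f (σ t) :=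
    setIntegral_mono_set (integrableOn_Ioo_of_mem_Icc (hfm.comp hσ) hfσ01 0 (3 / 4))
      (ae_of_all _ fun t => (hfσ01 t).1) (Set.Ioo_subset_Ioo_right (by norm_num)).eventuallyLE
  linarith
end

section
/- Let (X,𝓑) be a measurable space and consider the Hilbert space 𝓗(X) of equivalence classes f√λ of pairs (f,λ) with f ∈ L²(λ), λ a σ-finite measure, where (f,λ) ∼ (g,μ) iff there is ξ with λ ≪ ξ, μ ≪ ξ and f√(dλ/dξ) = g√(dμ/dξ) ξ-a.e., with inner product ⟨f₁√λ₁, f₂√λ₂⟩ = ∫ f̄₁ f₂ √(dλ₁/dμ) √(dλ₂/dμ) dμ for any μ dominating λ₁, λ₂. Let σ : X → X be measurable onto and R a positive linear operator with R1 = 1 and the pull-out property R((f∘σ)g) = f R(g). Then the map Ŝ(f√λ) := (f∘σ)√(λR) is well defined and isometric on 𝓗(X): ‖(f∘σ)√(λR)‖² = ‖f√λ‖², i.e., ∫ (f²∘σ) d(λR) = ∫ f² dλ. -/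
open MeasureTheory

/-- the map `Ŝ(f√λ) = (f∘σ)√(λR)` on the universal Hilbert space is
isometric; i.e. for every σ-finite measure `λ` (with `λR` the measure defined by
`∫ g d(λR) = ∫ Rg dλ`) and every bounded measurable `f`,
`∫ (f∘σ)² d(λR) = ∫ f² dλ`. -/
theorem stmt13 {X : Type*} [MeasurableSpace X]
    (σ : X → X) (hσ : Measurable σ) (hσonto : Function.Surjective σ)
    (R : (X → ℝ) → (X → ℝ))
    (hRmeas : ∀ f, Measurable f → Measurable (R f))
    (hRpos : ∀ f, (∀ x, 0 ≤ f x) → ∀ x, 0 ≤ R f x)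
    (hRadd : ∀ f g, R (f + g) = R f + R g)
    (hRsmul : ∀ (c : ℝ) (f), R (fun x => c * f x) = fun x => c * R f x)
    (hRone : R (fun _ => 1) = fun _ => 1)
    (hpull : ∀ f g, Measurable f → Measurable g →
      R (fun x => f (σ x) * g x) = fun x => f x * R g x)
    (lam lamR : Measure X) [SigmaFinite lam]
    (hlamR : ∀ g : X → ℝ, Measurable g → (∃ C, ∀ x, |g x| ≤ C) →
      ∫ x, g x ∂lamR = ∫ x, R g x ∂lam) :
    ∀ f : X → ℝ, Measurable f → (∃ C, ∀ x, |f x| ≤ C) →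
      ∫ x, (f (σ x)) ^ 2 ∂lamR = ∫ x, (f x) ^ 2 ∂lam := by
  intro f hf ⟨C, hC⟩
  have key : R (fun x => (f (σ x)) ^ 2) = fun x => (f x) ^ 2 := by
    have h := hpull (fun x => (f x) ^ 2) (fun _ => 1) (hf.pow_const 2) measurable_const
    simp only [mul_one] at h
    rw [h, hRone]
    simp
  have hb : ∃ C', ∀ x, |(f (σ x)) ^ 2| ≤ C' := by
    refine ⟨C ^ 2, fun x => ?_⟩
    rw [abs_pow]
    exact pow_le_pow_left₀ (abs_nonneg _) (hC _) 2
  rw [hlamR (fun x => f (σ x) ^ 2) ((hf.comp hσ).pow_const 2) hb, key]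
end

section
/- Let (X,𝓑,σ,R) be as usual with R1 = 1 and the pull-out property, and let μ be a probability measure with μR ≪ μ and W = d(μR)/dμ. Then: (1) the operator S : f ↦ (f∘σ)·√W is an isometry on L²(μ); and (2) the operator f ↦ (f∘σ)·W is the adjoint of R on L²(μ), i.e., ∫ (f∘σ)·W·g dμ = ∫ f·R(g) dμ for all f, g ∈ L²(μ). -/
open MeasureTheory

/-- with `μR ≪ μ` and `W = d(μR)/dμ`:
(1) `S : f ↦ (f∘σ)·√W` is an isometry on `L²(μ)`; and
(2) `f ↦ (f∘σ)·W` is the `L²(μ)`-adjoint of `R`. -/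
theorem stmt14 {X : Type*} [MeasurableSpace X]
    (σ : X → X) (hσ : Measurable σ) (hσonto : Function.Surjective σ)
    (R : (X → ℝ) → (X → ℝ))
    (hRmeas : ∀ f, Measurable f → Measurable (R f))
    (hRpos : ∀ f, (∀ x, 0 ≤ f x) → ∀ x, 0 ≤ R f x)
    (hRadd : ∀ f g, R (f + g) = R f + R g)
    (hRsmul : ∀ (c : ℝ) (f), R (fun x => c * f x) = fun x => c * R f x)
    (hRone : R (fun _ => 1) = fun _ => 1)
    (hpull : ∀ f g, Measurable f → Measurable g →
      R (fun x => f (σ x) * g x) = fun x => f x * R g x)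
    (μ : Measure X) [IsProbabilityMeasure μ]
    (W : X → ℝ) (hWmeas : Measurable W) (hW0 : ∀ x, 0 ≤ W x)
    (hW : ∀ f : X → ℝ, Measurable f → (∃ C, ∀ x, |f x| ≤ C) →
      ∫ x, R f x ∂μ = ∫ x, f x * W x ∂μ) :
    (∀ f : X → ℝ, Measurable f → (∃ C, ∀ x, |f x| ≤ C) →
      ∫ x, (f (σ x) * Real.sqrt (W x)) ^ 2 ∂μ = ∫ x, (f x) ^ 2 ∂μ) ∧
    (∀ f g : X → ℝ, Measurable f → Measurable g →
      (∃ C, ∀ x, |f x| ≤ C) → (∃ C, ∀ x, |g x| ≤ C) →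
      ∫ x, f (σ x) * W x * g x ∂μ = ∫ x, f x * R g x ∂μ) := by
  constructor
  · intro f hf ⟨C, hC⟩
    have hsq : Measurable (fun y => (f y)^2) := hf.pow_const 2
    have hb : ∃ C', ∀ x, |f (σ x) ^ 2| ≤ C' := by
      refine ⟨C^2, fun x => ?_⟩
      rw [abs_pow]
      have h := hC (σ x)
      have := abs_nonneg (f (σ x))
      nlinarith
    have hp : R (fun x => f (σ x) ^ 2) = fun x => f x ^ 2 := by
      have h2 := hpull (fun y => (f y)^2) (fun _ => 1) hsq measurable_const
      simpa [hRone] using h2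
    have key := hW (fun x => f (σ x) ^ 2) ((hsq.comp hσ)) hb
    rw [hp] at key
    simp only at key
    rw [key]
    exact integral_congr_ae (Filter.Eventually.of_forall fun x => by
      simp [mul_pow, Real.sq_sqrt (hW0 x)])
  · intro f g hf hg ⟨Cf, hCf⟩ ⟨Cg, hCg⟩
    have hh : Measurable (fun x => f (σ x) * g x) := (hf.comp hσ).mul hg
    have hb : ∃ C, ∀ x, |f (σ x) * g x| ≤ C := by
      refine ⟨Cf * Cg, fun x => ?_⟩
      rw [abs_mul]
      have h1 := hCf (σ x); have h2 := hCg x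
      have := abs_nonneg (f (σ x)); have := abs_nonneg (g x)
      nlinarith
    have key := hW (fun x => f (σ x) * g x) hh hb
    rw [hpull f g hf hg] at key
    simp only at key
    rw [key]
    exact integral_congr_ae (Filter.Eventually.of_forall fun x => by ring)
end

section
/- Let (X,𝓑,σ,R) be as usual with R1 = 1 and pull-out property, and let λ be a probability measure with λR ≪ λ and W = d(λR)/dλ. Then for every n ≥ 0: ∫ (W∘σⁿ)·(W∘σⁿ⁻¹)⋯(W∘σ)·W dλ = 1, and ∫ √((W∘σⁿ)⋯(W∘σ)·W) dλ ≤ 1. -/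
/-!
The pull-out property and `R 1 = 1` turn `∫ R f dλ = ∫ f W dλ` into `∫ (f ∘ σ) W dλ = ∫ f dλ`:
`σ` pushes the measure `W • λ` forward to `λ`. Since
`∏_{k ≤ n+1} W ∘ σᵏ = (∏_{k ≤ n} W ∘ σᵏ) ∘ σ · W`, this invariance peels off one factor at a time,
so every such product integrates to `λ X = 1`. The square-root bound is Jensen's inequality for
the concave function `√`.
-/

open MeasureTheory

section
variable {X : Type*} [MeasurableSpace X] {μ : Measure X} {σ : X → X}

theorem integral_comp_mul_eq_integral_of_pullout {R : (X → ℝ) → X → ℝ} {W : X → ℝ}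
    (hRone : R (fun _ => 1) = fun _ => 1)
    (hpull : ∀ f g, Measurable f → Measurable g →
      R (fun x => f (σ x) * g x) = fun x => f x * R g x)
    (hW : ∀ f : X → ℝ, Measurable f → (∃ C, ∀ x, |f x| ≤ C) →
      ∫ x, R f x ∂μ = ∫ x, f x * W x ∂μ)
    (hσ : Measurable σ) {f : X → ℝ} (hf : Measurable f) (hfb : ∃ C, ∀ x, |f x| ≤ C) :
    ∫ x, f (σ x) * W x ∂μ = ∫ x, f x ∂μ := by
  have hRf : R (fun x => f (σ x)) = f := by
    simpa [hRone] using hpull f (fun _ => 1) hf measurable_const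
  obtain ⟨C, hC⟩ := hfb
  rw [← hW (fun x => f (σ x)) (hf.comp hσ) ⟨C, fun x => hC (σ x)⟩, hRf]

theorem map_withDensity_ofReal_eq_self [IsFiniteMeasure μ] {W : X → ℝ} (hσ : Measurable σ)
    (hW0 : ∀ x, 0 ≤ W x)
    (htransfer : ∀ f : X → ℝ, Measurable f → (∃ C, ∀ x, |f x| ≤ C) →
      ∫ x, f (σ x) * W x ∂μ = ∫ x, f x ∂μ) :
    (μ.withDensity fun x => ENNReal.ofReal (W x)).map σ = μ := by
  rcases eq_zero_or_neZero μ with rfl | hμ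
  · simp
  have hWint : Integrable W μ := by
    refine Integrable.of_integral_ne_zero ?_
    have hWμ : ∫ x, W x ∂μ = μ.real Set.univ := by
      simpa using htransfer (fun _ => 1) measurable_const ⟨1, fun _ => by simp⟩
    exact hWμ ▸ measureReal_univ_ne_zero
  ext A hA
  have hA' : MeasurableSet (σ ⁻¹' A) := hσ hA
  have hind := htransfer (A.indicator 1) (measurable_one.indicator hA) ⟨1, fun x => by
    by_cases hx : x ∈ A <;> simp [hx]⟩
  have hlhs : (fun x => A.indicator 1 (σ x) * W x) = (σ ⁻¹' A).indicator W := by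
    ext x; by_cases hx : σ x ∈ A <;> simp [hx]
  rw [hlhs, integral_indicator hA', integral_indicator_one hA] at hind
  rw [Measure.map_apply hσ hA, withDensity_apply _ hA',
    ← ofReal_integral_eq_lintegral_ofReal hWint.integrableOn (Filter.Eventually.of_forall hW0),
    hind, measureReal_def, ENNReal.ofReal_toReal (measure_ne_top μ A)]

theorem lintegral_prod_iterate_eq_measure_univ {ρ : X → ENNReal} (hσ : Measurable σ)
    (hρ : Measurable ρ) (hinv : (μ.withDensity ρ).map σ = μ) (n : ℕ) :
    ∫⁻ x, ∏ k ∈ Finset.range n, ρ (σ^[k] x) ∂μ = μ Set.univ := by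
  induction n with
  | zero => simp
  | succ n ih =>
    have hF : Measurable fun x => ∏ k ∈ Finset.range n, ρ (σ^[k] x) :=
      Finset.measurable_prod _ fun k _ => hρ.comp (hσ.iterate k)
    calc ∫⁻ x, ∏ k ∈ Finset.range (n + 1), ρ (σ^[k] x) ∂μ
        = ∫⁻ x, ρ x * ∏ k ∈ Finset.range n, ρ (σ^[k] (σ x)) ∂μ := by
          simp only [Finset.prod_range_succ', Function.iterate_succ_apply,
            Function.iterate_zero_apply, mul_comm]
      _ = ∫⁻ x, ∏ k ∈ Finset.range n, ρ (σ^[k] x) ∂(μ.withDensity ρ).map σ := by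
          rw [lintegral_map hF hσ]
          exact (lintegral_withDensity_eq_lintegral_mul _ hρ (hF.comp hσ)).symm
      _ = μ Set.univ := by rw [hinv, ih]

theorem integral_sqrt_le_sqrt_integral [IsProbabilityMeasure μ] {f : X → ℝ} (hf0 : 0 ≤ᵐ[μ] f)
    (hf : Integrable f μ) : ∫ x, √(f x) ∂μ ≤ √(∫ x, f x ∂μ) := by
  have hsqrt_meas : AEStronglyMeasurable (fun x => √(f x)) μ :=
    Real.continuous_sqrt.comp_aestronglyMeasurable hf.1
  have hsqrt_int : Integrable (fun x => √(f x)) μ := by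
    refine ((memLp_two_iff_integrable_sq hsqrt_meas).2 ?_).integrable one_le_two
    exact hf.congr (hf0.mono fun x hx => (Real.sq_sqrt hx).symm)
  exact Real.strictConcaveOn_sqrt.concaveOn.le_map_integral Real.continuous_sqrt.continuousOn
    isClosed_Ici hf0 hf hsqrt_int
end

theorem stmt16_general {X : Type*} [MeasurableSpace X]
    (σ : X → X) (hσ : Measurable σ)
    (R : (X → ℝ) → (X → ℝ))
    (hRone : R (fun _ => 1) = fun _ => 1)
    (hpull : ∀ f g, Measurable f → Measurable g →
      R (fun x => f (σ x) * g x) = fun x => f x * R g x)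
    (lam : Measure X) [IsProbabilityMeasure lam]
    (W : X → ℝ) (hWmeas : Measurable W) (hW0 : ∀ x, 0 ≤ W x)
    (hW : ∀ f : X → ℝ, Measurable f → (∃ C, ∀ x, |f x| ≤ C) →
      ∫ x, R f x ∂lam = ∫ x, f x * W x ∂lam) :
    ∀ n : ℕ,
      (∫ x, ∏ k ∈ Finset.range (n + 1), W (σ^[k] x) ∂lam = 1) ∧
      (∫ x, Real.sqrt (∏ k ∈ Finset.range (n + 1), W (σ^[k] x)) ∂lam ≤ 1) := by
  intro n
  have hinv := map_withDensity_ofReal_eq_self hσ hW0 fun f hf hfb =>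
    integral_comp_mul_eq_integral_of_pullout hRone hpull hW hσ hf hfb
  have hP0 : 0 ≤ᵐ[lam] fun x => ∏ k ∈ Finset.range (n + 1), W (σ^[k] x) :=
    Filter.Eventually.of_forall fun x => Finset.prod_nonneg fun k _ => hW0 _
  have hPmeas : Measurable fun x => ∏ k ∈ Finset.range (n + 1), W (σ^[k] x) :=
    Finset.measurable_prod _ fun k _ => hWmeas.comp (hσ.iterate k)
  have hP : ∫ x, ∏ k ∈ Finset.range (n + 1), W (σ^[k] x) ∂lam = 1 := by
    rw [integral_eq_lintegral_of_nonneg_ae hP0 hPmeas.aestronglyMeasurable]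
    simp_rw [ENNReal.ofReal_prod_of_nonneg fun k _ => hW0 _]
    rw [lintegral_prod_iterate_eq_measure_univ hσ hWmeas.ennreal_ofReal hinv, measure_univ,
      ENNReal.toReal_one]
  refine ⟨hP, ?_⟩
  calc _ ≤ √(∫ x, ∏ k ∈ Finset.range (n + 1), W (σ^[k] x) ∂lam) :=
        integral_sqrt_le_sqrt_integral hP0 (.of_integral_ne_zero (by simp [hP]))
    _ = 1 := by rw [hP, Real.sqrt_one]

/-- with `λR ≪ λ`, `W = d(λR)/dλ`, `λ` a probability measure, for all
`n ≥ 0`: `∫ (W∘σⁿ)⋯(W∘σ)·W dλ = 1` and `∫ √((W∘σⁿ)⋯(W∘σ)·W) dλ ≤ 1`. -/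
theorem stmt16 {X : Type*} [MeasurableSpace X]
    (σ : X → X) (hσ : Measurable σ) (hσonto : Function.Surjective σ)
    (R : (X → ℝ) → (X → ℝ))
    (hRmeas : ∀ f, Measurable f → Measurable (R f))
    (hRpos : ∀ f, (∀ x, 0 ≤ f x) → ∀ x, 0 ≤ R f x)
    (hRadd : ∀ f g, R (f + g) = R f + R g)
    (hRsmul : ∀ (c : ℝ) (f), R (fun x => c * f x) = fun x => c * R f x)
    (hRone : R (fun _ => 1) = fun _ => 1)
    (hpull : ∀ f g, Measurable f → Measurable g →
      R (fun x => f (σ x) * g x) = fun x => f x * R g x)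
    (lam : Measure X) [IsProbabilityMeasure lam]
    (W : X → ℝ) (hWmeas : Measurable W) (hW0 : ∀ x, 0 ≤ W x)
    (hW : ∀ f : X → ℝ, Measurable f → (∃ C, ∀ x, |f x| ≤ C) →
      ∫ x, R f x ∂lam = ∫ x, f x * W x ∂lam) :
    ∀ n : ℕ,
      (∫ x, ∏ k ∈ Finset.range (n + 1), W (σ^[k] x) ∂lam = 1) ∧
      (∫ x, Real.sqrt (∏ k ∈ Finset.range (n + 1), W (σ^[k] x)) ∂lam ≤ 1) :=
  stmt16_general σ hσ R hRone hpull lam W hWmeas hW0 hW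
end
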